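/- In F_[→] the suffixing and prefixing rules are derivable: if ⊢_{F_[→]} A→B, then ⊢_{F_[→]} (B→C)→(A→C) and ⊢_{F_[→]} (C→A)→(C→B) for every formula C. -/
import Mathlib

/-- Implicational formulas: built from propositional variables using only `→`. -/
inductive Fm : Type
  | var : ℕ → Fm
  | imp : Fm → Fm → Fm

/-- `chain [A₁,…,Aₙ] E` is the formula `A₁→(A₂→(⋯→(Aₙ→E)⋯))` (and `E` when n = 0). -/
def chain : List Fm → Fm → Fm
  | [], E => E
  | A :: L, E => Fm.imp A (chain L E)

/-- Theorems of the Hilbert system `F_[→]`. -/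
inductive FThm : Fm → Prop
  | id (A : Fm) : FThm (A.imp A)
  | mp {A B : Fm} : FThm A → FThm (A.imp B) → FThm B
  | afort {A : Fm} (B : Fm) : FThm A → FThm (B.imp A)
  | rule4 {L : List Fm} {B C D : Fm} :
      FThm (chain L (B.imp C)) → FThm (chain L (C.imp D)) →
      FThm (chain L (B.imp D))

/-- In `F_[→]` the suffixing and prefixing rules are derivable. -/
theorem suffixing_prefixing_F (A B : Fm) (h : FThm (A.imp B)) :
    (∀ C : Fm, FThm ((B.imp C).imp (A.imp C))) ∧
    (∀ C : Fm, FThm ((C.imp A).imp (C.imp B))) := by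
  constructor
  · intro C
    have h1 : FThm (chain [B.imp C] (A.imp B)) := FThm.afort _ h
    have h2 : FThm (chain [B.imp C] (B.imp C)) := FThm.id _
    exact FThm.rule4 h1 h2
  · intro C
    have h1 : FThm (chain [C.imp A] (C.imp A)) := FThm.id _
    have h2 : FThm (chain [C.imp A] (A.imp B)) := FThm.afort _ h
    exact FThm.rule4 h1 h2
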